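/- Let V_κ be a weighted payoff objective and suppose p ∈ (0,1)⁵, q ∈ [0,1]⁵, p is not a best response with respect to V_κ, and player X cannot locally improve V_κ. Assume each single-coordinate marginal function of V_κ is monotone or constant. Then there exists d > 0 such that V_κ(p', q) = V_κ(p, q) for all p' with ‖p' - p‖ < d (V_κ is locally constant in p near p). -/

import Mathlib

/-!
Along a coordinate line `x ↦ update p i x` the payoff is a ratio `N x / D x` of affine
functions: `x` enters only `ν₀` (for `i = 0`) or a single row of `1 - λ • M` (for `i > 0`), so
by Cramer's rule and multilinearity of the determinant both `D = det (1 - λ • M)` and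
`N = ν₀ ᵥ* adj (1 - λ • M) ⬝ᵥ u` are affine in `x`. As `M` is row-stochastic and `λ < 1`, the
matrix `1 - λ • M` is strictly diagonally dominant, so `D` does not vanish on the cube. A ratio
of affine functions with an interior critical point is constant. Moving from `p` to `p'` one
coordinate at a time, every intermediate point is still a local maximum along the next
coordinate line, so the payoff never changes.
-/

open Matrix Filter

noncomputable section

/-- Row of the transition matrix for cooperation probabilities `a` (player X) and `b` (player Y). -/
def row2 (a b : ℝ) : Fin 4 → ℝ := ![a * b, a * (1 - b), (1 - a) * b, (1 - a) * (1 - b)]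

/-- Initial distribution over the four states CC, CD, DC, DD. -/
def nu0 (p q : Fin 5 → ℝ) : Fin 4 → ℝ := row2 (p 0) (q 0)

/-- Transition matrix `M(p,q)` of the repeated game for memory-one strategies. -/
def Mmat (p q : Fin 5 → ℝ) : Matrix (Fin 4) (Fin 4) ℝ :=
  Matrix.of ![row2 (p 1) (q 1), row2 (p 2) (q 3), row2 (p 3) (q 2), row2 (p 4) (q 4)]

/-- Discounted average state distribution `v = (1-λ)·ν₀·(I - λM)⁻¹`. -/
def vdist (lam : ℝ) (p q : Fin 5 → ℝ) : Fin 4 → ℝ :=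
  (1 - lam) • Matrix.vecMul (nu0 p q) (1 - lam • Mmat p q)⁻¹

/-- A memory-one strategy: all five entries lie in `[0,1]`. -/
def inCube (p : Fin 5 → ℝ) : Prop := ∀ i, p i ∈ Set.Icc (0:ℝ) 1

/-- Discounted repeated-game payoff with one-shot payoff vector `u`. -/
def pay (lam : ℝ) (p q : Fin 5 → ℝ) (u : Fin 4 → ℝ) : ℝ :=
  dotProduct (vdist lam p q) u

/-- One-shot payoff vector of player X. -/
def uvecX (R S T P : ℝ) : Fin 4 → ℝ := ![R, S, T, P]

/-- One-shot payoff vector of player Y. -/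
def uvecY (R S T P : ℝ) : Fin 4 → ℝ := ![R, T, S, P]

open Function Topology

def IsAffine {E : Type*} [AddCommGroup E] [Module ℝ E] (f : ℝ → E) : Prop :=
  ∃ a b : E, ∀ x, f x = x • a + b

namespace IsAffine

variable {E : Type*} [AddCommGroup E] [Module ℝ E]

theorem const (c : E) : IsAffine fun _ : ℝ => c := ⟨0, c, fun x => by simp⟩

theorem const_smul {f : ℝ → E} (hf : IsAffine f) (t : ℝ) : IsAffine fun x => t • f x := by
  obtain ⟨a, b, hf⟩ := hf
  exact ⟨t • a, t • b, fun x => by simp only [hf]; module⟩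

theorem const_sub {f : ℝ → E} (hf : IsAffine f) (c : E) : IsAffine fun x => c - f x := by
  obtain ⟨a, b, hf⟩ := hf
  exact ⟨-a, c - b, fun x => by simp only [hf]; module⟩

theorem pi {ι : Type*} [Finite ι] {f : ℝ → ι → E} (hf : ∀ i, IsAffine fun x => f x i) :
    IsAffine f := by
  choose a b hab using hf
  exact ⟨a, b, fun x => funext fun i => hab i x⟩

theorem div_eq_of_isLocalMax {N D : ℝ → ℝ} (hN : IsAffine N) (hD : IsAffine D) {x₀ : ℝ}
    (hD₀ : D x₀ ≠ 0) (hmax : IsLocalMax (fun x => N x / D x) x₀) {x : ℝ} (hx : D x ≠ 0) :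
    N x / D x = N x₀ / D x₀ := by
  obtain ⟨a, b, hN⟩ := hN
  obtain ⟨c, d, hD⟩ := hD
  simp only [smul_eq_mul] at hN hD
  have hderiv : HasDerivAt (fun x => N x / D x) ((a * D x₀ - N x₀ * c) / D x₀ ^ 2) x₀ := by
    have hN' : HasDerivAt N a x₀ := by
      simpa [funext hN] using ((hasDerivAt_id x₀).mul_const a).add_const b
    have hD' : HasDerivAt D c x₀ := by
      simpa [funext hD] using ((hasDerivAt_id x₀).mul_const c).add_const d
    exact hN'.div hD' hD₀
  have hcrit : a * D x₀ = N x₀ * c := by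
    have := hmax.hasDerivAt_eq_zero hderiv
    rw [div_eq_zero_iff, sub_eq_zero] at this
    exact this.resolve_right (pow_ne_zero 2 hD₀)
  -- `N x * D x₀ - N x₀ * D x = (x - x₀) * (a * D x₀ - N x₀ * c)`
  rw [div_eq_div_iff hx hD₀]
  simp only [hN, hD] at hcrit ⊢
  linear_combination (x - x₀) * hcrit

end IsAffine

theorem one_sub_smul_updateRow {n : Type*} [DecidableEq n] (A : Matrix n n ℝ) (k : n)
    (v : n → ℝ) (t : ℝ) :
    1 - t • A.updateRow k v = (1 - t • A).updateRow k (Pi.single k 1 - t • v) := by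
  ext a b
  rcases eq_or_ne a k with rfl | h
  · simp [one_apply, Pi.single_apply, eq_comm]
  · simp [updateRow_ne h]

section MatrixAffine

variable {n : Type*} [Fintype n]

theorem IsAffine.vecMul_const_dotProduct {ν : ℝ → n → ℝ} (hν : IsAffine ν) (B : Matrix n n ℝ)
    (u : n → ℝ) : IsAffine fun x => ν x ᵥ* B ⬝ᵥ u := by
  obtain ⟨a, b, hν⟩ := hν
  exact ⟨a ᵥ* B ⬝ᵥ u, b ᵥ* B ⬝ᵥ u, fun x => by
    simp only [hν, add_vecMul, smul_vecMul, add_dotProduct, smul_dotProduct]⟩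

theorem IsAffine.const_vecMul_dotProduct {B : ℝ → Matrix n n ℝ} (hB : IsAffine B)
    (ν u : n → ℝ) : IsAffine fun x => ν ᵥ* B x ⬝ᵥ u := by
  obtain ⟨a, b, hB⟩ := hB
  exact ⟨ν ᵥ* a ⬝ᵥ u, ν ᵥ* b ⬝ᵥ u, fun x => by
    simp only [hB, vecMul_add, vecMul_smul, add_dotProduct, smul_dotProduct]⟩

variable [DecidableEq n]

theorem IsAffine.det_updateRow {v : ℝ → n → ℝ} (hv : IsAffine v) (A : Matrix n n ℝ) (k : n) :
    IsAffine fun x => (A.updateRow k (v x)).det := by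
  obtain ⟨a, b, hv⟩ := hv
  exact ⟨(A.updateRow k a).det, (A.updateRow k b).det, fun x => by
    simp only [hv, det_updateRow_add, det_updateRow_smul, smul_eq_mul]⟩

theorem IsAffine.adjugate_updateRow {v : ℝ → n → ℝ} (hv : IsAffine v) (A : Matrix n n ℝ)
    (k : n) : IsAffine fun x => (A.updateRow k (v x)).adjugate := by
  refine IsAffine.pi fun i => IsAffine.pi fun j => ?_
  simp only [adjugate_apply]
  rcases eq_or_ne j k with rfl | hjk
  · simpa only [updateRow_idem] using IsAffine.const _
  · simpa only [updateRow_comm _ hjk.symm] using hv.det_updateRow _ k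

theorem det_one_sub_smul_ne_zero {M : Matrix n n ℝ} (hM : M ∈ rowStochastic ℝ n) {t : ℝ}
    (ht₀ : 0 ≤ t) (ht₁ : t < 1) : (1 - t • M).det ≠ 0 := by
  refine det_ne_zero_of_sum_row_lt_diag fun k => ?_
  have hoff : ∀ j ∈ Finset.univ.erase k, ‖(1 - t • M) k j‖ = t * M k j := fun j hj => by
    rw [Matrix.sub_apply, one_apply_ne (Finset.ne_of_mem_erase hj).symm, Matrix.smul_apply,
      smul_eq_mul, zero_sub, norm_neg,
      Real.norm_of_nonneg (mul_nonneg ht₀ (nonneg_of_mem_rowStochastic hM))]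
  have hdiag : ‖(1 - t • M) k k‖ = 1 - t * M k k := by
    rw [Matrix.sub_apply, one_apply_eq, Matrix.smul_apply, smul_eq_mul, Real.norm_of_nonneg]
    nlinarith [le_one_of_mem_rowStochastic hM (i := k) (j := k)]
  rw [Finset.sum_congr rfl hoff, ← Finset.mul_sum, Finset.sum_erase_eq_sub (Finset.mem_univ k),
    sum_row_of_mem_rowStochastic hM, hdiag]
  nlinarith [le_one_of_mem_rowStochastic hM (i := k) (j := k)]

end MatrixAffine

theorem sum_row2 (a b : ℝ) : ∑ j, row2 a b j = 1 := by
  simp only [row2, Fin.sum_univ_four, Matrix.cons_val]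
  ring

theorem row2_nonneg {a b : ℝ} (ha : a ∈ Set.Icc 0 1) (hb : b ∈ Set.Icc 0 1) (j : Fin 4) :
    0 ≤ row2 a b j := by
  obtain ⟨ha₀, ha₁⟩ := ha
  obtain ⟨hb₀, hb₁⟩ := hb
  fin_cases j <;> simp [row2] <;> nlinarith

theorem isAffine_row2 (b : ℝ) : IsAffine fun x => row2 x b :=
  ⟨![b, 1 - b, -b, -(1 - b)], ![0, 0, b, 1 - b], fun x => by
    ext j; fin_cases j <;> simp [row2] <;> ring⟩

-- Player Y sees X's states CD and DC as DC and CD, hence `q 3` in row 1 and `q 2` in row 2.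
theorem Mmat_row (p q : Fin 5 → ℝ) (i : Fin 4) :
    Mmat p q i = row2 (p i.succ) (q (![1, 3, 2, 4] i)) := by
  fin_cases i <;> rfl

theorem Mmat_mem_rowStochastic {p q : Fin 5 → ℝ} (hp : inCube p) (hq : inCube q) :
    Mmat p q ∈ rowStochastic ℝ (Fin 4) := by
  refine mem_rowStochastic_iff_sum.2 ⟨fun i j => ?_, fun i => ?_⟩
  · rw [Mmat_row]
    exact row2_nonneg (hp _) (hq _) j
  · rw [Mmat_row]
    exact sum_row2 _ _

theorem Mmat_update_zero (p q : Fin 5 → ℝ) (x : ℝ) : Mmat (update p 0 x) q = Mmat p q := by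
  funext i
  rw [Mmat_row, Mmat_row, update_of_ne (Fin.succ_ne_zero i)]

theorem Mmat_update_succ (p q : Fin 5 → ℝ) (i : Fin 4) (x : ℝ) :
    Mmat (update p i.succ x) q = (Mmat p q).updateRow i (row2 x (q (![1, 3, 2, 4] i))) := by
  funext a
  rcases eq_or_ne a i with rfl | h
  · rw [updateRow_self, Mmat_row, update_self]
  · rw [updateRow_ne h, Mmat_row, Mmat_row, update_of_ne ((Fin.succ_injective _).ne h)]

theorem inCube_update {p : Fin 5 → ℝ} (hp : inCube p) (i : Fin 5) {x : ℝ}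
    (hx : x ∈ Set.Icc 0 1) : inCube (update p i x) :=
  (forall_update_iff p (fun _ y => y ∈ Set.Icc (0 : ℝ) 1)).2 ⟨hx, fun j _ => hp j⟩

def payNum (lam : ℝ) (p q : Fin 5 → ℝ) (u : Fin 4 → ℝ) : ℝ :=
  (1 - lam) * (nu0 p q ᵥ* (1 - lam • Mmat p q).adjugate ⬝ᵥ u)

def payDen (lam : ℝ) (p q : Fin 5 → ℝ) : ℝ :=
  (1 - lam • Mmat p q).det

theorem pay_eq_div (lam : ℝ) (p q : Fin 5 → ℝ) (u : Fin 4 → ℝ) :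
    pay lam p q u = payNum lam p q u / payDen lam p q := by
  rw [pay, vdist, payNum, payDen, inv_def, Ring.inverse_eq_inv, vecMul_smul, smul_dotProduct,
    smul_dotProduct, smul_eq_mul, smul_eq_mul]
  ring

theorem payDen_ne_zero {lam : ℝ} (hlam : lam ∈ Set.Ico 0 1) {p q : Fin 5 → ℝ} (hp : inCube p)
    (hq : inCube q) : payDen lam p q ≠ 0 :=
  det_one_sub_smul_ne_zero (Mmat_mem_rowStochastic hp hq) hlam.1 hlam.2

theorem isAffine_payDen_update (lam : ℝ) (p q : Fin 5 → ℝ) (i : Fin 5) :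
    IsAffine fun x => payDen lam (update p i x) q := by
  cases i using Fin.cases with
  | zero =>
    simp only [payDen, Mmat_update_zero]
    exact IsAffine.const _
  | succ i =>
    simp only [payDen, Mmat_update_succ, one_sub_smul_updateRow]
    exact (((isAffine_row2 _).const_smul lam).const_sub _).det_updateRow _ _

theorem isAffine_payNum_update (lam : ℝ) (p q : Fin 5 → ℝ) (u : Fin 4 → ℝ) (i : Fin 5) :
    IsAffine fun x => payNum lam (update p i x) q u := by
  cases i using Fin.cases with
  | zero =>
    have hν : ∀ x, nu0 (update p 0 x) q = row2 x (q 0) := fun x => by simp [nu0]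
    simp only [payNum, Mmat_update_zero, hν]
    exact ((isAffine_row2 _).vecMul_const_dotProduct _ u).const_smul (1 - lam)
  | succ i =>
    have hν : ∀ x, nu0 (update p i.succ x) q = nu0 p q := fun x => by
      rw [nu0, nu0, update_of_ne (Fin.succ_ne_zero i).symm]
    simp only [payNum, Mmat_update_succ, one_sub_smul_updateRow, hν]
    exact ((((isAffine_row2 _).const_smul lam).const_sub _).adjugate_updateRow _ _
      |>.const_vecMul_dotProduct _ u).const_smul (1 - lam)

theorem pay_update_eq_of_isLocalMax {lam : ℝ} (hlam : lam ∈ Set.Ico 0 1) {q r : Fin 5 → ℝ}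
    (hq : inCube q) (hr : inCube r) (u : Fin 4 → ℝ) (i : Fin 5)
    (hmax : IsLocalMax (fun x => pay lam (update r i x) q u) (r i)) {x : ℝ}
    (hx : x ∈ Set.Icc 0 1) : pay lam (update r i x) q u = pay lam r q u := by
  have hden : ∀ y ∈ Set.Icc (0 : ℝ) 1, payDen lam (update r i y) q ≠ 0 := fun y hy =>
    payDen_ne_zero hlam (inCube_update hr i hy) hq
  simp only [pay_eq_div] at hmax ⊢
  simpa using (isAffine_payNum_update lam r q u i).div_eq_of_isLocalMax
    (isAffine_payDen_update lam r q i) (hden _ (hr i)) hmax (hden x hx)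

theorem pay_eq_of_forall_near_le {lam : ℝ} (hlam : lam ∈ Set.Ico 0 1) {p q : Fin 5 → ℝ}
    (hp : ∀ i, p i ∈ Set.Ioo 0 1) (hq : inCube q) (u : Fin 4 → ℝ) {d : ℝ}
    (hmax : ∀ p', inCube p' → (∀ i, |p' i - p i| < d) → pay lam p' q u ≤ pay lam p q u)
    {p' : Fin 5 → ℝ} (hp' : inCube p') (hnear : ∀ i, |p' i - p i| < d) :
    pay lam p' q u = pay lam p q u := by
  have hd : 0 < d := (abs_nonneg _).trans_lt (hnear 0)
  suffices ∀ s : Finset (Fin 5), pay lam (s.piecewise p' p) q u = pay lam p q u by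
    simpa using this Finset.univ
  intro s
  induction s using Finset.induction_on with
  | empty => simp
  | insert i s hi ih =>
    set r := s.piecewise p' p
    have hr : inCube r := fun j =>
      s.piecewise_cases p' p (· ∈ Set.Icc (0 : ℝ) 1) (hp' j) (Set.Ioo_subset_Icc_self (hp j))
    have hrnear : ∀ j, |r j - p j| < d := fun j =>
      s.piecewise_cases p' p (|· - p j| < d) (hnear j) (by simpa using hd)
    have hri : r i = p i := s.piecewise_eq_of_notMem _ _ hi
    rw [Finset.piecewise_insert, ← ih]
    refine pay_update_eq_of_isLocalMax hlam hq hr u i ?_ (hp' i)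
    have hnhds : Set.Ioo 0 1 ∩ Metric.ball (p i) d ∈ 𝓝 (r i) := by
      rw [hri]
      exact Filter.inter_mem (Ioo_mem_nhds (hp i).1 (hp i).2) (Metric.ball_mem_nhds _ hd)
    filter_upwards [hnhds] with x ⟨hx, hxd⟩
    rw [update_eq_self, ih]
    refine hmax _ (inCube_update hr i (Set.Ioo_subset_Icc_self hx)) ?_
    exact (forall_update_iff r (fun j y => |y - p j| < d)).2 ⟨hxd, fun j _ => hrnear j⟩

theorem no_local_improvement_implies_locally_constant_general
    (R S T P lam κX κY : ℝ) (hlam : lam ∈ Set.Ico (0:ℝ) 1)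
    (p q : Fin 5 → ℝ) (hp : ∀ i, p i ∈ Set.Ioo (0:ℝ) 1) (hq : inCube q)
    (V : (Fin 5 → ℝ) → ℝ)
    (hV : ∀ p', V p' = κX * pay lam p' q (uvecX R S T P) + κY * pay lam p' q (uvecY R S T P))
    (hno : ∃ d₀ > (0:ℝ), ∀ p', inCube p' → (∀ i, |p' i - p i| < d₀) → V p' ≤ V p) :
    ∃ d > (0:ℝ), ∀ p', inCube p' → (∀ i, |p' i - p i| < d) → V p' = V p := by
  have hVpay : V = fun p' => pay lam p' q (κX • uvecX R S T P + κY • uvecY R S T P) := by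
    funext p'
    simp only [hV, pay, dotProduct_add, dotProduct_smul, smul_eq_mul]
  subst hVpay
  obtain ⟨d, hd, hmax⟩ := hno
  exact ⟨d, hd, fun p' => pay_eq_of_forall_near_le hlam hp hq _ hmax⟩

theorem no_local_improvement_implies_locally_constant
    (R S T P lam κX κY : ℝ) (hlam : lam ∈ Set.Ico (0:ℝ) 1)
    (p q pstar : Fin 5 → ℝ) (hp : ∀ i, p i ∈ Set.Ioo (0:ℝ) 1) (hq : inCube q)
    (V : (Fin 5 → ℝ) → ℝ)
    (hV : ∀ p', V p' = κX * pay lam p' q (uvecX R S T P) + κY * pay lam p' q (uvecY R S T P))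
    (hstar : inCube pstar) (hbr : ∀ p', inCube p' → V p' ≤ V pstar)
    (hnotbr : V p < V pstar)
    (hmono : ∀ i : Fin 5,
      MonotoneOn (fun z => V (p + z • (Pi.single i 1 : Fin 5 → ℝ))) (Set.Icc (-(p i)) (1 - p i)) ∨
      AntitoneOn (fun z => V (p + z • (Pi.single i 1 : Fin 5 → ℝ))) (Set.Icc (-(p i)) (1 - p i)))
    (hno : ∃ d₀ > (0:ℝ), ∀ p', inCube p' → (∀ i, |p' i - p i| < d₀) → V p' ≤ V p) :
    ∃ d > (0:ℝ), ∀ p', inCube p' → (∀ i, |p' i - p i| < d) → V p' = V p :=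
  no_local_improvement_implies_locally_constant_general R S T P lam κX κY hlam p q hp hq V hV hno
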